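/- Let (X,d) be a metric space, let λ ∈ (0,1), let C ≥ 0, let D be the set of dyadic rationals in [0,1], and let f : D → X be a function such that d(f(j/2^n), f((j+1)/2^n)) ≤ λ^n C for every n ≥ 0 and every j ∈ {0,1,...,2^n − 1}. Then for all s,t ∈ D, d(f(s), f(t)) ≤ (2C/(1−λ)) · |s − t|^α, where α := −ln(λ)/ln(2) > 0. In particular, f is Hölder continuous with exponent α. -/

import Mathlib

/-- `D`, the set of all dyadic rationals in `[0,1]`. -/
def dyadics : Set ℝ := ⋃ n : ℕ, {x : ℝ | ∃ j : ℕ, j ≤ 2 ^ n ∧ x = (j : ℝ) / 2 ^ n}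

private lemma chain_bound {X : Type*} [MetricSpace X] {lam C : ℝ} (hlam0 : 0 < lam) (hC : 0 ≤ C)
    (f : ℝ → X)
    (hf : ∀ (n j : ℕ), j < 2 ^ n →
      dist (f ((j : ℝ) / 2 ^ n)) (f (((j : ℝ) + 1) / 2 ^ n)) ≤ lam ^ n * C) :
    ∀ (n m j k : ℕ), j ≤ k → k ≤ 2 ^ n → (k - j) * 2 ^ m < 2 ^ n →
      dist (f ((j : ℝ) / 2 ^ n)) (f ((k : ℝ) / 2 ^ n)) ≤
        2 * C * ∑ i ∈ Finset.Icc (m + 1) n, lam ^ i := by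
  have hsum : ∀ a b : ℕ, (0 : ℝ) ≤ ∑ i ∈ Finset.Icc a b, lam ^ i := fun a b =>
    Finset.sum_nonneg fun i _ => pow_nonneg hlam0.le i
  intro n
  induction n with
  | zero =>
    intro m j k hjk hk hlt
    have h2 : 0 < 2 ^ m := Nat.two_pow_pos m
    have : j = k := by
      rcases Nat.lt_one_iff.mp (by simpa using hlt) with h
      omega
    subst this
    simp only [dist_self]
    exact mul_nonneg (by linarith) (hsum _ _)
  | succ n ih =>
    intro m j k hjk hk hlt
    rcases eq_or_lt_of_le hjk with rfl | hjk'
    · simp only [dist_self]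
      exact mul_nonneg (by linarith) (hsum _ _)
    -- j < k
    have hmn : m ≤ n := by
      have h1 : 1 ≤ k - j := by omega
      have : 2 ^ m < 2 ^ (n + 1) := lt_of_le_of_lt (by nlinarith [Nat.two_pow_pos m]) hlt
      have := (Nat.pow_lt_pow_iff_right (a := 2) (by norm_num)).mp this
      omega
    set j' := (j + 1) / 2 with hj'
    set k' := k / 2 with hk'
    have h2j' : 2 * j' = j ∨ 2 * j' = j + 1 := by omega
    have h2k' : 2 * k' = k ∨ 2 * k' = k - 1 := by omega
    have hj'k' : j' ≤ k' := by omega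
    have hk'le : k' ≤ 2 ^ n := by
      have : k ≤ 2 * 2 ^ n := by simpa [pow_succ, mul_comm] using hk
      omega
    have hmid : (k' - j') * 2 ^ m < 2 ^ n := by
      have h1 : 2 * ((k' - j') * 2 ^ m) ≤ (k - j) * 2 ^ m := by
        have : 2 * (k' - j') ≤ k - j := by omega
        nlinarith [Nat.two_pow_pos m]
      have h2 : (k - j) * 2 ^ m < 2 * 2 ^ n := by simpa [pow_succ, mul_comm] using hlt
      omega
    have ihm := ih m j' k' hj'k' hk'le hmid
    -- real casts
    have hden : ((2 : ℝ) ^ (n + 1)) ≠ 0 := by positivity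
    have hden' : ((2 : ℝ) ^ n) ≠ 0 := by positivity
    have cast_half : ∀ a : ℕ, ((2 * a : ℕ) : ℝ) / 2 ^ (n + 1) = (a : ℝ) / 2 ^ n := by
      intro a
      push_cast
      field_simp
      ring
    have d1 : dist (f ((j : ℝ) / 2 ^ (n + 1))) (f ((j' : ℝ) / 2 ^ n)) ≤ lam ^ (n + 1) * C := by
      rcases h2j' with h | h
      · have : (j' : ℝ) / 2 ^ n = (j : ℝ) / 2 ^ (n + 1) := by
          rw [← cast_half j', h]
        rw [this, dist_self]
        positivity
      · have heq : (j' : ℝ) / 2 ^ n = ((j : ℝ) + 1) / 2 ^ (n + 1) := by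
          rw [← cast_half j', h]; push_cast; ring_nf
        rw [heq]
        exact hf (n + 1) j (lt_of_lt_of_le hjk' hk)
    have d2 : dist (f ((k' : ℝ) / 2 ^ n)) (f ((k : ℝ) / 2 ^ (n + 1))) ≤ lam ^ (n + 1) * C := by
      rcases h2k' with h | h
      · have : (k' : ℝ) / 2 ^ n = (k : ℝ) / 2 ^ (n + 1) := by
          rw [← cast_half k', h]
        rw [this, dist_self]
        positivity
      · have hk1 : k - 1 < 2 ^ (n + 1) := by omega
        have heq : (k' : ℝ) / 2 ^ n = ((k - 1 : ℕ) : ℝ) / 2 ^ (n + 1) := by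
          rw [← cast_half k', h]
        have heq2 : (((k - 1 : ℕ) : ℝ) + 1) / 2 ^ (n + 1) = (k : ℝ) / 2 ^ (n + 1) := by
          have : ((k - 1 : ℕ) : ℝ) = (k : ℝ) - 1 := by
            have : 1 ≤ k := by omega
            push_cast [this]; ring
          rw [this]; ring_nf
        rw [heq, ← heq2]
        exact hf (n + 1) (k - 1) hk1
    have tri : dist (f ((j : ℝ) / 2 ^ (n + 1))) (f ((k : ℝ) / 2 ^ (n + 1))) ≤
        dist (f ((j : ℝ) / 2 ^ (n + 1))) (f ((j' : ℝ) / 2 ^ n)) +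
        dist (f ((j' : ℝ) / 2 ^ n)) (f ((k' : ℝ) / 2 ^ n)) +
        dist (f ((k' : ℝ) / 2 ^ n)) (f ((k : ℝ) / 2 ^ (n + 1))) := dist_triangle4 _ _ _ _
    have hsplit : ∑ i ∈ Finset.Icc (m + 1) (n + 1), lam ^ i =
        (∑ i ∈ Finset.Icc (m + 1) n, lam ^ i) + lam ^ (n + 1) := by
      rw [← Finset.sum_Icc_succ_top (by omega : m + 1 ≤ n + 1)]
    calc dist (f ((j : ℝ) / 2 ^ (n + 1))) (f ((k : ℝ) / 2 ^ (n + 1))) ≤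
        lam ^ (n + 1) * C + 2 * C * (∑ i ∈ Finset.Icc (m + 1) n, lam ^ i) + lam ^ (n + 1) * C := by
          linarith [tri, d1, d2, ihm]
      _ = 2 * C * ((∑ i ∈ Finset.Icc (m + 1) n, lam ^ i) + lam ^ (n + 1)) := by ring
      _ = 2 * C * ∑ i ∈ Finset.Icc (m + 1) (n + 1), lam ^ i := by rw [hsplit]

private lemma general_case {X : Type*} [MetricSpace X] {lam C : ℝ}
    (hlam : lam ∈ Set.Ioo (0 : ℝ) 1) (hC : 0 ≤ C)
    (f : ℝ → X)
    (hf : ∀ (n j : ℕ), j < 2 ^ n →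
      dist (f ((j : ℝ) / 2 ^ n)) (f (((j : ℝ) + 1) / 2 ^ n)) ≤ lam ^ n * C)
    (n J K : ℕ) (hJK : J < K) (hK : K ≤ 2 ^ n) (hdiff : K - J < 2 ^ n) :
    dist (f ((J : ℝ) / 2 ^ n)) (f ((K : ℝ) / 2 ^ n)) ≤
      (2 * C / (1 - lam)) * (((K - J : ℕ) : ℝ) / 2 ^ n) ^ (-Real.log lam / Real.log 2) := by
  obtain ⟨hlam0, hlam1⟩ := hlam
  set α := -Real.log lam / Real.log 2 with hα
  have hαpos : 0 < α := by
    apply div_pos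
    · linarith [Real.log_neg hlam0 hlam1]
    · exact Real.log_pos (by norm_num)
  have hcoef : 0 ≤ 2 * C / (1 - lam) := div_nonneg (by linarith) (by linarith)
  have hlam_rpow : ∀ p : ℕ, lam ^ p = ((1 : ℝ) / 2 ^ p) ^ α := by
    intro p
    have h1 : ((1 : ℝ) / 2 ^ p) = (2 : ℝ) ^ (-(p : ℝ)) := by
      rw [Real.rpow_neg (by norm_num), Real.rpow_natCast]
      ring
    rw [h1, ← Real.rpow_natCast lam p, ← Real.rpow_mul (by norm_num)]
    rw [Real.rpow_def_of_pos hlam0, Real.rpow_def_of_pos (by norm_num : (0:ℝ) < 2)]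
    congr 1
    have hlog2 : Real.log 2 ≠ 0 := ne_of_gt (Real.log_pos (by norm_num))
    field_simp [hα]
    rw [hα]; field_simp
  set d := K - J with hd
  have hd1 : 1 ≤ d := by omega
  set e := Nat.log 2 d with he
  have hed : 2 ^ e ≤ d := Nat.pow_log_le_self 2 (by omega)
  have hde : d < 2 ^ (e + 1) := Nat.lt_pow_succ_log_self (by norm_num) d
  have hen : e < n := by
    have : 2 ^ e < 2 ^ n := lt_of_le_of_lt hed hdiff
    exact (Nat.pow_lt_pow_iff_right (by norm_num)).mp this
  set m := n - 1 - e with hm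
  have hmen : m + 1 + e = n := by omega
  have hup : d * 2 ^ m < 2 ^ n := by
    calc d * 2 ^ m < 2 ^ (e + 1) * 2 ^ m := by
          have h2 : 0 < 2 ^ m := Nat.two_pow_pos m
          exact Nat.mul_lt_mul_of_lt_of_le hde le_rfl h2
      _ = 2 ^ n := by rw [← pow_add]; congr 1; omega
  have hdown : 2 ^ n ≤ d * 2 ^ (m + 1) := by
    calc 2 ^ n = 2 ^ e * 2 ^ (m + 1) := by rw [← pow_add]; congr 1; omega
      _ ≤ d * 2 ^ (m + 1) := Nat.mul_le_mul_right _ hed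
  have hchain := chain_bound hlam0 hC f hf n m J K hJK.le hK hup
  -- geometric sum bound
  have hgeo : ∑ i ∈ Finset.Icc (m + 1) n, lam ^ i ≤ lam ^ (m + 1) / (1 - lam) := by
    rw [← Finset.Ico_add_one_right_eq_Icc, geom_sum_Ico (ne_of_lt hlam1) (by omega)]
    have key : (lam ^ (n + 1) - lam ^ (m + 1)) / (lam - 1) =
        (lam ^ (m + 1) - lam ^ (n + 1)) / (1 - lam) := by
      rw [div_eq_div_iff (by linarith) (by linarith)]
      ring
    rw [key, div_le_div_iff₀ (by linarith) (by linarith)]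
    have h1 : 0 ≤ lam ^ (n + 1) := pow_nonneg hlam0.le _
    nlinarith
  have hstep1 : dist (f ((J : ℝ) / 2 ^ n)) (f ((K : ℝ) / 2 ^ n)) ≤
      (2 * C / (1 - lam)) * lam ^ (m + 1) := by
    calc dist (f ((J : ℝ) / 2 ^ n)) (f ((K : ℝ) / 2 ^ n)) ≤
        2 * C * ∑ i ∈ Finset.Icc (m + 1) n, lam ^ i := hchain
      _ ≤ 2 * C * (lam ^ (m + 1) / (1 - lam)) := by
          apply mul_le_mul_of_nonneg_left hgeo (by linarith)
      _ = (2 * C / (1 - lam)) * lam ^ (m + 1) := by ring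
  -- lam ^ (m+1) ≤ ((d : ℝ)/2^n) ^ α
  have hfinal : lam ^ (m + 1) ≤ ((d : ℝ) / 2 ^ n) ^ α := by
    rw [hlam_rpow (m + 1)]
    apply Real.rpow_le_rpow (by positivity) _ hαpos.le
    rw [div_le_div_iff₀ (by positivity) (by positivity)]
    have : (2 : ℝ) ^ n ≤ (d : ℝ) * 2 ^ (m + 1) := by
      exact_mod_cast hdown
    linarith
  calc dist (f ((J : ℝ) / 2 ^ n)) (f ((K : ℝ) / 2 ^ n)) ≤
      (2 * C / (1 - lam)) * lam ^ (m + 1) := hstep1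
    _ ≤ (2 * C / (1 - lam)) * ((d : ℝ) / 2 ^ n) ^ α :=
        mul_le_mul_of_nonneg_left hfinal hcoef

private lemma key_bound {X : Type*} [MetricSpace X] {lam C : ℝ}
    (hlam : lam ∈ Set.Ioo (0 : ℝ) 1) (hC : 0 ≤ C)
    (f : ℝ → X)
    (hf : ∀ (n j : ℕ), j < 2 ^ n →
      dist (f ((j : ℝ) / 2 ^ n)) (f (((j : ℝ) + 1) / 2 ^ n)) ≤ lam ^ n * C)
    (n J K : ℕ) (hJK : J ≤ K) (hK : K ≤ 2 ^ n) :
    dist (f ((J : ℝ) / 2 ^ n)) (f ((K : ℝ) / 2 ^ n)) ≤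
      (2 * C / (1 - lam)) * |(J : ℝ) / 2 ^ n - (K : ℝ) / 2 ^ n| ^ (-Real.log lam / Real.log 2) := by
  obtain ⟨hlam0, hlam1⟩ := hlam
  set α := -Real.log lam / Real.log 2 with hα
  have hαpos : 0 < α := by
    apply div_pos
    · linarith [Real.log_neg hlam0 hlam1]
    · exact Real.log_pos (by norm_num)
  have hcoef : 0 ≤ 2 * C / (1 - lam) := div_nonneg (by linarith) (by linarith)
  have habs : |(J : ℝ) / 2 ^ n - (K : ℝ) / 2 ^ n| = ((K - J : ℕ) : ℝ) / 2 ^ n := by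
    rw [abs_sub_comm, abs_of_nonneg]
    · push_cast [hJK]; ring
    · have hJKr : (J : ℝ) ≤ K := by exact_mod_cast hJK
      have h2 : (0:ℝ) < 2 ^ n := by positivity
      rw [sub_nonneg]
      exact div_le_div_of_nonneg_right hJKr h2.le
  rw [habs]
  rcases eq_or_lt_of_le hJK with rfl | hlt
  · simp only [dist_self]
    positivity
  rcases lt_or_eq_of_le (show K - J ≤ 2 ^ n by omega) with hdiff | hdiff
  · exact general_case ⟨hlam0, hlam1⟩ hC f hf n J K hlt hK hdiff
  · -- K - J = 2^n forces J = 0, K = 2^n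
    have hJ0 : J = 0 := by omega
    have hKn : K = 2 ^ n := by omega
    subst hJ0
    have habs1 : ((K - 0 : ℕ) : ℝ) / 2 ^ n = 1 := by
      rw [hKn, Nat.sub_zero]; push_cast; field_simp
    rw [habs1, Real.one_rpow]
    have h0 : ((0 : ℕ) : ℝ) / 2 ^ n = ((0 : ℕ) : ℝ) / 2 ^ 0 := by norm_num
    have h1 : ((K : ℕ) : ℝ) / 2 ^ n = (((0 : ℕ) : ℝ) + 1) / 2 ^ 0 := by
      rw [hKn]; push_cast; field_simp; norm_num
    have hd := hf 0 0 (by norm_num)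
    rw [← h0, ← h1] at hd
    simp only [pow_zero, one_mul] at hd
    calc dist (f (((0:ℕ) : ℝ) / 2 ^ n)) (f ((K : ℝ) / 2 ^ n)) ≤ C := hd
      _ ≤ 2 * C / (1 - lam) * 1 := by
          rw [mul_one, div_eq_mul_inv]
          have hinv : 1 ≤ (1 - lam)⁻¹ := by
            rw [le_inv_comm₀] <;> linarith
          nlinarith

/-- Let `(X,d)` be a metric space, `λ ∈ (0,1)`, `C ≥ 0`, and let `f`
(defined on the dyadic rationals `D` of `[0,1]`) satisfy
`d(f(j/2^n), f((j+1)/2^n)) ≤ λ^n C` for every `n ≥ 0` and `j ∈ {0,…,2^n − 1}`.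
Then with `α = −ln(λ)/ln(2) > 0`, for all `s, t ∈ D`,
`d(f(s), f(t)) ≤ (2C/(1−λ)) |s − t|^α`; in particular `f` is `α`-Hölder continuous. -/
theorem dyadic_holder_bound
    {X : Type*} [MetricSpace X] {lam C : ℝ} (hlam : lam ∈ Set.Ioo (0 : ℝ) 1) (hC : 0 ≤ C)
    (f : ℝ → X)
    (hf : ∀ (n j : ℕ), j < 2 ^ n →
      dist (f ((j : ℝ) / 2 ^ n)) (f (((j : ℝ) + 1) / 2 ^ n)) ≤ lam ^ n * C) :
    0 < -Real.log lam / Real.log 2 ∧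
    ∀ s ∈ dyadics, ∀ t ∈ dyadics,
      dist (f s) (f t) ≤ (2 * C / (1 - lam)) * |s - t| ^ (-Real.log lam / Real.log 2) := by
  constructor
  · apply div_pos
    · linarith [Real.log_neg hlam.1 hlam.2]
    · exact Real.log_pos (by norm_num)
  · intro s hs t ht
    simp only [dyadics, Set.mem_iUnion, Set.mem_setOf_eq] at hs ht
    obtain ⟨a, j, hja, rfl⟩ := hs
    obtain ⟨b, k, hkb, rfl⟩ := ht
    have hs' : (j : ℝ) / 2 ^ a = ((j * 2 ^ b : ℕ) : ℝ) / 2 ^ (a + b) := by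
      push_cast
      rw [pow_add]
      field_simp
    have ht' : (k : ℝ) / 2 ^ b = ((k * 2 ^ a : ℕ) : ℝ) / 2 ^ (a + b) := by
      push_cast
      rw [pow_add]
      field_simp
    rw [hs', ht']
    have hJ : j * 2 ^ b ≤ 2 ^ (a + b) := by
      rw [pow_add]
      exact Nat.mul_le_mul_right _ hja
    have hK : k * 2 ^ a ≤ 2 ^ (a + b) := by
      rw [pow_add, mul_comm (2^a)]
      exact Nat.mul_le_mul_right _ hkb
    rcases le_total (j * 2 ^ b) (k * 2 ^ a) with h | h
    · exact key_bound hlam hC f hf (a + b) _ _ h hK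
    · rw [dist_comm, abs_sub_comm]
      exact key_bound hlam hC f hf (a + b) _ _ h hJ
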